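/- Let α ∈ (1/2,1). There exists a constant C > 0 (depending only on α) such that for all real numbers s, t with 0 ≤ s < t, ∫_0^s (K(t−u) − K(s−u))² du ≤ C (t−s)^(2α−1). -/

import Mathlib

open MeasureTheory intervalIntegral Real

/-- Fractional kernel `K(u) = u^(α-1)/Γ(α)` for `u > 0`, `0` otherwise. -/
noncomputable def Kker (α u : ℝ) : ℝ := if 0 < u then u ^ (α - 1) / Real.Gamma α else 0

/-- First-order resolvent kernel `L(u) = u^(-α)/Γ(1-α)` for `u > 0`, `0` otherwise. -/
noncomputable def Lker (α u : ℝ) : ℝ := if 0 < u then u ^ (-α) / Real.Gamma (1 - α) else 0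

/-- Discretization map `φ_h(t) = h⌊t/h⌋`. -/
noncomputable def phi (h t : ℝ) : ℝ := h * (⌊t / h⌋ : ℝ)

/-- `χ_h(u) = u - φ_h(u)`. -/
noncomputable def chi (h u : ℝ) : ℝ := u - phi h u

/-- Discretized kernel `K^{(h)}`. -/
noncomputable def Kh (α h t s : ℝ) : ℝ :=
  if 0 ≤ s ∧ s < phi h t then Kker α (phi h t - s) else 0

/-- The kernel `g^{(h)}(t,s) = ∫_s^t L(t-v) K^{(h)}(v,s) dv`. -/
noncomputable def gh (α h t s : ℝ) : ℝ := ∫ v in s..t, Lker α (t - v) * Kh α h v s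

/-!
For `0 < u < s < t` the kernel values `a = K(t - u)` and `b = K(s - u)` satisfy `0 ≤ a ≤ b`,
since `K` is nonnegative and decreasing on `(0, ∞)`; hence `(a - b)² ≤ b² - a²`. The right-hand
side integrates in closed form: with `β = 2α - 1 > 0`,
`∫₀ˢ K(s - u)² - K(t - u)² du = (s^β - t^β + (t - s)^β) / (β Γ(α)²) ≤ (t - s)^β / (β Γ(α)²)`.
-/

theorem intervalIntegral.integral_mono_on_Ioo_of_nonneg {f g : ℝ → ℝ} {a b : ℝ}
    (hab : a ≤ b) (hf : ∀ x ∈ Set.Ioo a b, 0 ≤ f x) (hg : IntervalIntegrable g volume a b)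
    (hfg : ∀ x ∈ Set.Ioo a b, f x ≤ g x) :
    (∫ x in a..b, f x) ≤ ∫ x in a..b, g x := by
  simp only [integral_of_le hab, integral_Ioc_eq_integral_Ioo]
  refine integral_mono_of_nonneg ?_ (hg.1.mono_set Set.Ioo_subset_Ioc_self) ?_
  · filter_upwards [ae_restrict_mem measurableSet_Ioo] with x hx using hf x hx
  · filter_upwards [ae_restrict_mem measurableSet_Ioo] with x hx using hfg x hx

theorem intervalIntegral.integral_sub_left_rpow {r : ℝ} (hr : -1 < r) (a b c : ℝ) :
    ∫ u in a..b, (c - u) ^ r = ((c - a) ^ (r + 1) - (c - b) ^ (r + 1)) / (r + 1) := by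
  rw [integral_comp_sub_left (· ^ r), integral_rpow (Or.inl hr)]

theorem intervalIntegral.intervalIntegrable_sub_left_rpow {r : ℝ} (hr : -1 < r) (a b c : ℝ) :
    IntervalIntegrable (fun u => (c - u) ^ r) volume a b := by
  simpa using (intervalIntegrable_rpow' hr (a := c - a) (b := c - b)).comp_sub_left c

theorem sq_sub_le_sq_sub_sq {a b : ℝ} (ha : 0 ≤ a) (hab : a ≤ b) :
    (a - b) ^ 2 ≤ b ^ 2 - a ^ 2 := by
  nlinarith

section Kker

variable {α : ℝ}

theorem Kker_nonneg (hα : 0 < α) (x : ℝ) : 0 ≤ Kker α x := by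
  unfold Kker
  split_ifs with hx
  · exact div_nonneg (rpow_nonneg hx.le _) (Gamma_pos_of_pos hα).le
  · exact le_rfl

theorem Kker_antitoneOn (hα : 0 < α) (hα1 : α ≤ 1) : AntitoneOn (Kker α) (Set.Ioi 0) := by
  intro x hx y hy hxy
  simp only [Kker, if_pos (show (0 : ℝ) < x from hx), if_pos (show (0 : ℝ) < y from hy)]
  exact div_le_div_of_nonneg_right (rpow_le_rpow_of_nonpos hx hxy (by linarith))
    (Gamma_pos_of_pos hα).le

theorem Kker_sq_of_nonneg (hα : α ≠ 1) {x : ℝ} (hx : 0 ≤ x) :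
    Kker α x ^ 2 = x ^ (2 * α - 2) / Gamma α ^ 2 := by
  -- at `x = 0` both sides vanish, as `0 ^ r = 0` for `r ≠ 0`
  rcases hx.lt_or_eq with hx | rfl
  · rw [Kker, if_pos hx, div_pow, ← rpow_natCast, ← rpow_mul hx.le]
    push_cast
    ring_nf
  · have : 2 * α - 2 ≠ 0 := fun h => hα (by linarith)
    simp [Kker, zero_rpow this]

theorem intervalIntegrable_Kker_sub_left_sq (hα : 1 / 2 < α) (hα1 : α ≠ 1) {a b c : ℝ}
    (ha : a ≤ c) (hb : b ≤ c) :
    IntervalIntegrable (fun u => Kker α (c - u) ^ 2) volume a b := by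
  refine ((intervalIntegrable_sub_left_rpow (r := 2 * α - 2) (by linarith) a b c).div_const
    (Gamma α ^ 2)).congr fun u hu => (Kker_sq_of_nonneg hα1 (sub_nonneg.2 ?_)).symm
  rcases Set.mem_uIoc.1 hu with ⟨-, hu⟩ | ⟨-, hu⟩ <;> linarith

theorem integral_Kker_sub_left_sq (hα : 1 / 2 < α) (hα1 : α ≠ 1) {s c : ℝ}
    (hs : 0 ≤ s) (hsc : s ≤ c) :
    ∫ u in (0 : ℝ)..s, Kker α (c - u) ^ 2
      = (c ^ (2 * α - 1) - (c - s) ^ (2 * α - 1)) / ((2 * α - 1) * Gamma α ^ 2) := by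
  have hK : Set.EqOn (fun u => Kker α (c - u) ^ 2) (fun u => (c - u) ^ (2 * α - 2) / Gamma α ^ 2)
      (Set.uIcc 0 s) := by
    intro u hu
    rw [Set.uIcc_of_le hs] at hu
    exact Kker_sq_of_nonneg hα1 (by linarith [hu.2])
  rw [integral_congr hK, intervalIntegral.integral_div, integral_sub_left_rpow (by linarith),
    sub_zero, div_div, show 2 * α - 2 + 1 = 2 * α - 1 by ring]

end Kker

/-- `∫_0^s (K(t−u) − K(s−u))² du ≤ C (t−s)^(2α−1)`. -/
theorem kernel_increment_L2_bound (α : ℝ) (hα : α ∈ Set.Ioo (1/2 : ℝ) 1) :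
    ∃ C > 0, ∀ s t : ℝ, 0 ≤ s → s < t →
      (∫ u in (0:ℝ)..s, (Kker α (t - u) - Kker α (s - u)) ^ 2)
        ≤ C * (t - s) ^ (2 * α - 1) := by
  obtain ⟨hα, hα1⟩ := hα
  have hβ : 0 < 2 * α - 1 := by linarith
  have hD : 0 < (2 * α - 1) * Gamma α ^ 2 :=
    mul_pos hβ (pow_pos (Gamma_pos_of_pos (by linarith)) 2)
  refine ⟨1 / ((2 * α - 1) * Gamma α ^ 2), one_div_pos.2 hD, fun s t hs hst => ?_⟩
  have hKs := intervalIntegrable_Kker_sub_left_sq hα hα1.ne hs le_rfl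
  have hKt := intervalIntegrable_Kker_sub_left_sq hα hα1.ne (hs.trans hst.le) hst.le
  have hpt : ∀ u ∈ Set.Ioo 0 s,
      (Kker α (t - u) - Kker α (s - u)) ^ 2 ≤ Kker α (s - u) ^ 2 - Kker α (t - u) ^ 2 :=
    fun u hu => sq_sub_le_sq_sub_sq (Kker_nonneg (by linarith) _)
      (Kker_antitoneOn (by linarith) hα1.le (sub_pos.2 hu.2) (sub_pos.2 (hu.2.trans hst))
        (sub_le_sub_right hst.le u))
  calc (∫ u in (0:ℝ)..s, (Kker α (t - u) - Kker α (s - u)) ^ 2)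
      ≤ ∫ u in (0:ℝ)..s, Kker α (s - u) ^ 2 - Kker α (t - u) ^ 2 :=
        integral_mono_on_Ioo_of_nonneg hs (fun _ _ => sq_nonneg _) (hKs.sub hKt) hpt
    _ = (s ^ (2 * α - 1) - t ^ (2 * α - 1) + (t - s) ^ (2 * α - 1))
          / ((2 * α - 1) * Gamma α ^ 2) := by
      rw [integral_sub hKs hKt, integral_Kker_sub_left_sq hα hα1.ne hs le_rfl,
        integral_Kker_sub_left_sq hα hα1.ne hs hst.le, sub_self, zero_rpow hβ.ne']
      ring
    _ ≤ 1 / ((2 * α - 1) * Gamma α ^ 2) * (t - s) ^ (2 * α - 1) := by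
      rw [one_div_mul_eq_div]
      gcongr
      linarith [rpow_le_rpow hs hst.le hβ.le]
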